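/- Let 0 < α < 1 and ρ > 0, and set λ₀ = ρ/√(1−α) and θ₀ = θ(λ₀). Then θ is odd, strictly positive on (0,∞), strictly increasing on [0, λ₀], strictly decreasing on [λ₀, ∞), tends to 0 at +∞, and attains its maximum θ₀ > 0 on [0,∞) exactly at λ₀. Consequently: (i) if R > θ₀ then the phase ψ_R has no stationary point and |ψ_R′(λ)| ≥ R − θ₀ for all λ ∈ ℝ; (ii) if R = θ₀ then λ₀ is the unique stationary point of ψ_R in [0,∞) and both ψ_R′ and ψ_R″ vanish at λ₀. -/

import Mathlib

/-- `θ(λ) = α·λ·(λ² + ρ²)^{−(1−α/2)}`. -/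
noncomputable def theta (α ρ lam : ℝ) : ℝ :=
  α * lam * (lam ^ 2 + ρ ^ 2) ^ (-(1 - α / 2))

/-- The phase `ψ_R(λ) = (λ² + ρ²)^{α/2} − R·λ`, so that `ψ_R′(λ) = θ(λ) − R`. -/
noncomputable def psi (α ρ R lam : ℝ) : ℝ :=
  (lam ^ 2 + ρ ^ 2) ^ (α / 2) - R * lam

/-!
Writing `u = λ² + ρ²`, one has `θ′(λ) = α (ρ² − (1 − α) λ²) u^{α/2 − 2}`, whose sign is that
of `λ₀² − λ²` because `(1 − α) λ₀² = ρ²`. So `θ` rises on `[0, λ₀]` and falls on `[λ₀, ∞)`,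
and since `0 ≤ θ(λ) ≤ α λ^{α−1}` it decays at infinity. Being odd and positive on `(0, ∞)`,
`θ` is bounded above on all of `ℝ` by `θ₀ = θ(λ₀)`. Both statements about the phase follow
from `ψ_R′ = θ − R`, and `ψ_R″(λ₀) = θ′(λ₀) = 0` is the critical-point equation once more.
-/

open Filter Set Topology

section

variable {α ρ : ℝ}

theorem theta_neg (lam : ℝ) : theta α ρ (-lam) = -theta α ρ lam := by
  simp only [theta, neg_sq]
  ring

theorem theta_pos (hα : 0 < α) {lam : ℝ} (hlam : 0 < lam) : 0 < theta α ρ lam := by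
  unfold theta
  positivity

theorem continuous_theta (hρ : ρ ≠ 0) : Continuous (theta α ρ) := by
  have hu (x : ℝ) : x ^ 2 + ρ ^ 2 ≠ 0 := by positivity
  exact (continuous_const.mul continuous_id).mul
    ((continuous_id.pow 2).add continuous_const |>.rpow_const fun x => Or.inl (hu x))

theorem hasDerivAt_theta (hρ : ρ ≠ 0) (lam : ℝ) :
    HasDerivAt (theta α ρ)
      (α * (ρ ^ 2 - (1 - α) * lam ^ 2) * (lam ^ 2 + ρ ^ 2) ^ (α / 2 - 2)) lam := by
  have hu : lam ^ 2 + ρ ^ 2 ≠ 0 := by positivity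
  have hsq : HasDerivAt (fun l : ℝ => l ^ 2 + ρ ^ 2) (2 * lam) lam := by
    simpa using (hasDerivAt_pow 2 lam).add_const (ρ ^ 2)
  have hlin : HasDerivAt (fun l : ℝ => α * l) α lam := by
    simpa using (hasDerivAt_id lam).const_mul α
  refine (hlin.mul (hsq.rpow_const (p := -(1 - α / 2)) (Or.inl hu))).congr_deriv ?_
  have hpow : (lam ^ 2 + ρ ^ 2) ^ (-(1 - α / 2)) =
      (lam ^ 2 + ρ ^ 2) ^ (α / 2 - 2) * (lam ^ 2 + ρ ^ 2) := by
    rw [← Real.rpow_add_one hu]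
    ring_nf
  rw [show -(1 - α / 2) - 1 = α / 2 - 2 by ring, hpow]
  ring

theorem strictMonoOn_theta (hα0 : 0 < α) (hα1 : α < 1) (hρ : ρ ≠ 0) {lam0 : ℝ}
    (hcrit : (1 - α) * lam0 ^ 2 = ρ ^ 2) : StrictMonoOn (theta α ρ) (Icc 0 lam0) := by
  refine strictMonoOn_of_deriv_pos (convex_Icc _ _) (continuous_theta hρ).continuousOn ?_
  intro x hx
  rw [interior_Icc] at hx
  rw [(hasDerivAt_theta hρ x).deriv]
  have hsign : 0 < ρ ^ 2 - (1 - α) * x ^ 2 := by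
    rw [← hcrit]
    obtain ⟨hx0, hxlam0⟩ := hx
    have hx' : 0 < (lam0 - x) * (lam0 + x) := mul_pos (by linarith) (by linarith)
    nlinarith [mul_pos (sub_pos.2 hα1) hx']
  have hu : 0 < x ^ 2 + ρ ^ 2 := by positivity
  positivity

theorem strictAntiOn_theta (hα0 : 0 < α) (hα1 : α < 1) (hρ : ρ ≠ 0) {lam0 : ℝ}
    (hlam0 : 0 ≤ lam0) (hcrit : (1 - α) * lam0 ^ 2 = ρ ^ 2) :
    StrictAntiOn (theta α ρ) (Ici lam0) := by
  refine strictAntiOn_of_deriv_neg (convex_Ici _) (continuous_theta hρ).continuousOn ?_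
  intro x hx
  rw [interior_Ici, mem_Ioi] at hx
  rw [(hasDerivAt_theta hρ x).deriv]
  have hsign : ρ ^ 2 - (1 - α) * x ^ 2 < 0 := by
    rw [← hcrit]
    have hx' : 0 < (x - lam0) * (x + lam0) := mul_pos (by linarith) (by linarith)
    nlinarith [mul_pos (sub_pos.2 hα1) hx']
  have hu : 0 < (x ^ 2 + ρ ^ 2) ^ (α / 2 - 2) := by positivity
  exact mul_neg_of_neg_of_pos (mul_neg_of_pos_of_neg hα0 hsign) hu

theorem tendsto_theta_atTop (hα : α < 1) : Tendsto (theta α ρ) atTop (𝓝 0) := by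
  have hdecay : Tendsto (fun x : ℝ => x ^ (α - 1)) atTop (𝓝 0) := by
    simpa [neg_sub] using tendsto_rpow_neg_atTop (y := 1 - α) (by linarith)
  have hlower : ∀ᶠ x : ℝ in atTop, 0 ≤ x * (x ^ 2 + ρ ^ 2) ^ (-(1 - α / 2)) := by
    filter_upwards [eventually_ge_atTop 0] with x hx
    positivity
  have hupper : ∀ᶠ x : ℝ in atTop, x * (x ^ 2 + ρ ^ 2) ^ (-(1 - α / 2)) ≤ x ^ (α - 1) := by
    filter_upwards [eventually_gt_atTop 0] with x hx
    calc x * (x ^ 2 + ρ ^ 2) ^ (-(1 - α / 2))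
        ≤ x * (x ^ 2) ^ (-(1 - α / 2)) := by
          refine mul_le_mul_of_nonneg_left ?_ hx.le
          exact Real.rpow_le_rpow_of_nonpos (by positivity) (by nlinarith) (by linarith)
      _ = x ^ (α - 1) := by
          rw [← Real.rpow_natCast x 2, ← Real.rpow_mul hx.le, ← Real.rpow_one_add' hx.le]
          · push_cast; ring_nf
          · push_cast; linarith
  have htheta : theta α ρ = fun x => α * (x * (x ^ 2 + ρ ^ 2) ^ (-(1 - α / 2))) :=
    funext fun x => by rw [theta, mul_assoc]
  rw [htheta, ← mul_zero α]
  exact (tendsto_of_tendsto_of_tendsto_of_le_of_le' tendsto_const_nhds hdecay hlower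
    hupper).const_mul α

theorem theta_lt_theta_of_ne (hα0 : 0 < α) (hα1 : α < 1) (hρ : ρ ≠ 0) {lam0 lam : ℝ}
    (hlam0 : 0 ≤ lam0) (hcrit : (1 - α) * lam0 ^ 2 = ρ ^ 2) (hlam : 0 ≤ lam)
    (hne : lam ≠ lam0) : theta α ρ lam < theta α ρ lam0 := by
  rcases hne.lt_or_gt with hlt | hgt
  · exact strictMonoOn_theta hα0 hα1 hρ hcrit ⟨hlam, hlt.le⟩ ⟨hlam0, le_rfl⟩ hlt
  · exact strictAntiOn_theta hα0 hα1 hρ hlam0 hcrit (mem_Ici.2 le_rfl) hgt.le hgt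

theorem theta_le_theta (hα0 : 0 < α) (hα1 : α < 1) (hρ : ρ ≠ 0) {lam0 : ℝ}
    (hlam0 : 0 < lam0) (hcrit : (1 - α) * lam0 ^ 2 = ρ ^ 2) (lam : ℝ) :
    theta α ρ lam ≤ theta α ρ lam0 := by
  rcases le_or_gt 0 lam with hlam | hlam
  · rcases eq_or_ne lam lam0 with rfl | hne
    · exact le_rfl
    · exact (theta_lt_theta_of_ne hα0 hα1 hρ hlam0.le hcrit hlam hne).le
  · have hneg := theta_pos (ρ := ρ) hα0 (neg_pos.mpr hlam)
    have hmax := theta_pos (ρ := ρ) hα0 hlam0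
    rw [theta_neg] at hneg
    linarith

theorem hasDerivAt_psi (hρ : ρ ≠ 0) (R lam : ℝ) :
    HasDerivAt (psi α ρ R) (theta α ρ lam - R) lam := by
  have hsq : HasDerivAt (fun l : ℝ => l ^ 2 + ρ ^ 2) (2 * lam) lam := by
    simpa using (hasDerivAt_pow 2 lam).add_const (ρ ^ 2)
  have hlin : HasDerivAt (fun l : ℝ => R * l) R lam := by
    simpa using (hasDerivAt_id lam).const_mul R
  refine ((hsq.rpow_const (p := α / 2) (Or.inl (by positivity))).sub hlin).congr_deriv ?_
  rw [theta, show -(1 - α / 2) = α / 2 - 1 by ring]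
  ring

theorem deriv_psi (hρ : ρ ≠ 0) (R : ℝ) :
    deriv (psi α ρ R) = fun lam => theta α ρ lam - R :=
  funext fun lam => (hasDerivAt_psi hρ R lam).deriv

theorem iteratedDeriv_two_psi (hρ : ρ ≠ 0) (R lam : ℝ) :
    iteratedDeriv 2 (psi α ρ R) lam = deriv (theta α ρ) lam := by
  rw [iteratedDeriv_succ, iteratedDeriv_one, deriv_psi hρ, deriv_sub_const]

end

theorem stmt3 (α ρ : ℝ) (hα0 : 0 < α) (hα1 : α < 1) (hρ : 0 < ρ)
    (lam0 θ0 : ℝ) (hlam0 : lam0 = ρ / Real.sqrt (1 - α)) (hθ0 : θ0 = theta α ρ lam0) :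
    -- θ is odd
    (∀ lam : ℝ, theta α ρ (-lam) = - theta α ρ lam) ∧
    -- θ is strictly positive on (0, ∞)
    (∀ lam : ℝ, 0 < lam → 0 < theta α ρ lam) ∧
    -- θ is strictly increasing on [0, λ₀] and strictly decreasing on [λ₀, ∞)
    StrictMonoOn (theta α ρ) (Set.Icc 0 lam0) ∧
    StrictAntiOn (theta α ρ) (Set.Ici lam0) ∧
    -- θ tends to 0 at +∞
    Filter.Tendsto (theta α ρ) Filter.atTop (nhds 0) ∧
    -- θ attains its maximum θ₀ > 0 on [0, ∞) exactly at λ₀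
    0 < θ0 ∧
    (∀ lam : ℝ, 0 ≤ lam → theta α ρ lam ≤ θ0 ∧ (theta α ρ lam = θ0 ↔ lam = lam0)) ∧
    -- (i) if R > θ₀ then ψ_R has no stationary point and |ψ_R′| ≥ R − θ₀
    (∀ R : ℝ, θ0 < R →
      (∀ lam : ℝ, deriv (psi α ρ R) lam ≠ 0) ∧
      (∀ lam : ℝ, R - θ0 ≤ |deriv (psi α ρ R) lam|)) ∧
    -- (ii) if R = θ₀ then λ₀ is the unique stationary point of ψ_R in [0, ∞),
    -- and both ψ_R′ and ψ_R″ vanish there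
    (deriv (psi α ρ θ0) lam0 = 0 ∧ iteratedDeriv 2 (psi α ρ θ0) lam0 = 0 ∧
      ∀ lam : ℝ, 0 ≤ lam → deriv (psi α ρ θ0) lam = 0 → lam = lam0) := by
  have hρ' : ρ ≠ 0 := hρ.ne'
  have h1α : 0 < 1 - α := by linarith
  have hlam0_pos : 0 < lam0 := by rw [hlam0]; positivity
  have hcrit : (1 - α) * lam0 ^ 2 = ρ ^ 2 := by
    rw [hlam0, div_pow, Real.sq_sqrt h1α.le]
    field_simp
  have hle (lam : ℝ) : theta α ρ lam ≤ θ0 :=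
    hθ0 ▸ theta_le_theta hα0 hα1 hρ' hlam0_pos hcrit lam
  have hmax (lam : ℝ) (hlam : 0 ≤ lam) : theta α ρ lam = θ0 ↔ lam = lam0 := by
    refine ⟨fun heq => by_contra fun hne => ?_, fun h => h ▸ hθ0.symm⟩
    exact (theta_lt_theta_of_ne hα0 hα1 hρ' hlam0_pos.le hcrit hlam hne).ne (heq.trans hθ0)
  have hθ'_lam0 : deriv (theta α ρ) lam0 = 0 := by
    rw [(hasDerivAt_theta hρ' lam0).deriv, hcrit, sub_self, mul_zero, zero_mul]
  simp only [deriv_psi hρ', iteratedDeriv_two_psi hρ', hθ'_lam0, ← hθ0, sub_self]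
  refine ⟨theta_neg, fun _ => theta_pos hα0, strictMonoOn_theta hα0 hα1 hρ' hcrit,
    strictAntiOn_theta hα0 hα1 hρ' hlam0_pos.le hcrit, tendsto_theta_atTop hα1,
    hθ0 ▸ theta_pos hα0 hlam0_pos, fun lam hlam => ⟨hle lam, hmax lam hlam⟩,
    fun R hR => ⟨fun lam => ?_, fun lam => ?_⟩, trivial, trivial,
    fun lam hlam hstat => (hmax lam hlam).mp (sub_eq_zero.mp hstat)⟩
  · linarith [hle lam]
  · rw [abs_of_nonpos (by linarith [hle lam])]
    linarith [hle lam]
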